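/- The theory M + Δ0^P-WDC_ω proves Σ1^P-Foundation: in any model of M satisfying the Δ0^P weak dependent choices scheme for ω-sequences, every nonempty Σ1^P-definable class (with parameters) has an ∈-least element. -/

import Mathlib

universe u

/-- de Bruijn-style formulas of the language of set theory, with primitive
bounded quantifiers (`∈`-bounded and `⊆`-bounded) and unbounded quantifiers.
`SF n` is the type of formulas with (at most) `n` free variables. -/
inductive SF : ℕ → Type
  | mem {n} (i j : Fin n) : SF n
  | eq {n} (i j : Fin n) : SF n
  | not {n} (φ : SF n) : SF n
  | and {n} (φ ψ : SF n) : SF n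
  | or {n} (φ ψ : SF n) : SF n
  | bexMem {n} (i : Fin n) (φ : SF (n + 1)) : SF n
  | ballMem {n} (i : Fin n) (φ : SF (n + 1)) : SF n
  | bexSub {n} (i : Fin n) (φ : SF (n + 1)) : SF n
  | ballSub {n} (i : Fin n) (φ : SF (n + 1)) : SF n
  | ex {n} (φ : SF (n + 1)) : SF n
  | all {n} (φ : SF (n + 1)) : SF n

variable {X : Type u}

/-- `a ⊆ b` in the structure `⟨X, E⟩`. -/
def SubE (E : X → X → Prop) (a b : X) : Prop := ∀ z, E z a → E z b

/-- Satisfaction of a formula in the structure `⟨X, E⟩` under a valuation. -/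
def SF.Eval (E : X → X → Prop) : {n : ℕ} → SF n → (Fin n → X) → Prop
  | _, .mem i j, v => E (v i) (v j)
  | _, .eq i j, v => v i = v j
  | _, .not φ, v => ¬ φ.Eval E v
  | _, .and φ ψ, v => φ.Eval E v ∧ ψ.Eval E v
  | _, .or φ ψ, v => φ.Eval E v ∨ ψ.Eval E v
  | _, .bexMem i φ, v => ∃ x, E x (v i) ∧ φ.Eval E (Fin.snoc v x)
  | _, .ballMem i φ, v => ∀ x, E x (v i) → φ.Eval E (Fin.snoc v x)
  | _, .bexSub i φ, v => ∃ x, SubE E x (v i) ∧ φ.Eval E (Fin.snoc v x)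
  | _, .ballSub i φ, v => ∀ x, SubE E x (v i) → φ.Eval E (Fin.snoc v x)
  | _, .ex φ, v => ∃ x, φ.Eval E (Fin.snoc v x)
  | _, .all φ, v => ∀ x, φ.Eval E (Fin.snoc v x)

/-- `Δ₀` formulas: only `∈`-bounded quantifiers. -/
def SF.IsDelta0 : {n : ℕ} → SF n → Prop
  | _, .mem _ _ => True
  | _, .eq _ _ => True
  | _, .not φ => φ.IsDelta0
  | _, .and φ ψ => φ.IsDelta0 ∧ ψ.IsDelta0
  | _, .or φ ψ => φ.IsDelta0 ∧ ψ.IsDelta0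
  | _, .bexMem _ φ => φ.IsDelta0
  | _, .ballMem _ φ => φ.IsDelta0
  | _, .bexSub _ _ => False
  | _, .ballSub _ _ => False
  | _, .ex _ => False
  | _, .all _ => False

/-- Takahashi's class `Δ₀^𝒫`: only `∈`-bounded and `⊆`-bounded quantifiers. -/
def SF.IsDelta0P : {n : ℕ} → SF n → Prop
  | _, .mem _ _ => True
  | _, .eq _ _ => True
  | _, .not φ => φ.IsDelta0P
  | _, .and φ ψ => φ.IsDelta0P ∧ ψ.IsDelta0P
  | _, .or φ ψ => φ.IsDelta0P ∧ ψ.IsDelta0P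
  | _, .bexMem _ φ => φ.IsDelta0P
  | _, .ballMem _ φ => φ.IsDelta0P
  | _, .bexSub _ φ => φ.IsDelta0P
  | _, .ballSub _ φ => φ.IsDelta0P
  | _, .ex _ => False
  | _, .all _ => False

def Delta0C : ∀ n, SF n → Prop := fun _ φ => φ.IsDelta0
def Delta0PC : ∀ n, SF n → Prop := fun _ φ => φ.IsDelta0P
def Sigma1C : ∀ n, SF n → Prop := fun _ φ => ∃ ψ, ψ.IsDelta0 ∧ φ = SF.ex ψ
def Pi1C : ∀ n, SF n → Prop := fun _ φ => ∃ ψ, ψ.IsDelta0 ∧ φ = SF.all ψ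
def Sigma1PC : ∀ n, SF n → Prop := fun _ φ => ∃ ψ, ψ.IsDelta0P ∧ φ = SF.ex ψ
def Pi1PC : ∀ n, SF n → Prop := fun _ φ => ∃ ψ, ψ.IsDelta0P ∧ φ = SF.all ψ
def FullC : ∀ n, SF n → Prop := fun _ _ => True

/-- A Gödel numbering of formulas. -/
def SF.encode : {n : ℕ} → SF n → ℕ
  | _, .mem i j => Nat.pair 0 (Nat.pair i.val j.val)
  | _, .eq i j => Nat.pair 1 (Nat.pair i.val j.val)
  | _, .not φ => Nat.pair 2 φ.encode
  | _, .and φ ψ => Nat.pair 3 (Nat.pair φ.encode ψ.encode)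
  | _, .or φ ψ => Nat.pair 4 (Nat.pair φ.encode ψ.encode)
  | _, .bexMem i φ => Nat.pair 5 (Nat.pair i.val φ.encode)
  | _, .ballMem i φ => Nat.pair 6 (Nat.pair i.val φ.encode)
  | _, .bexSub i φ => Nat.pair 7 (Nat.pair i.val φ.encode)
  | _, .ballSub i φ => Nat.pair 8 (Nat.pair i.val φ.encode)
  | _, .ex φ => Nat.pair 9 φ.encode
  | _, .all φ => Nat.pair 10 φ.encode

/-- A theory (set of sentences) is recursively enumerable if the set of Gödel
numbers of its members is the domain of a partial recursive function. -/
def REset (S : Set (SF 0)) : Prop :=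
  ∃ f : ℕ →. ℕ, Nat.Partrec f ∧ ∀ φ : SF 0, φ ∈ S ↔ SF.encode φ ∈ f.Dom

/-- `⟨X, E⟩ ⊨ S` for a set `S` of sentences. -/
def SatT (E : X → X → Prop) (S : Set (SF 0)) : Prop :=
  ∀ φ ∈ S, SF.Eval E φ (fun i => i.elim0)

/-! ## Axioms and axiom schemes -/

def ExtensionalityAx (E : X → X → Prop) : Prop := ∀ a b, (∀ z, E z a ↔ E z b) → a = b
def EmptySetAx (E : X → X → Prop) : Prop := ∃ a, ∀ z, ¬ E z a
def PairAx (E : X → X → Prop) : Prop := ∀ x y, ∃ a, ∀ z, E z a ↔ (z = x ∨ z = y)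
def UnionAx (E : X → X → Prop) : Prop := ∀ a, ∃ b, ∀ z, E z b ↔ ∃ y, E y a ∧ E z y
def SetDiffAx (E : X → X → Prop) : Prop := ∀ a b, ∃ c, ∀ z, E z c ↔ (E z a ∧ ¬ E z b)
def PowerAx (E : X → X → Prop) : Prop := ∀ a, ∃ p, ∀ z, E z p ↔ SubE E z a
def TransSet (E : X → X → Prop) (t : X) : Prop := ∀ y, E y t → ∀ z, E z y → E z t
def TCoAx (E : X → X → Prop) : Prop := ∀ a, ∃ t, TransSet E t ∧ SubE E a t
def SuccOf (E : X → X → Prop) (x s : X) : Prop := ∀ z, E z s ↔ (E z x ∨ z = x)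
def InductiveSet (E : X → X → Prop) (a : X) : Prop :=
  (∃ e, E e a ∧ ∀ z, ¬ E z e) ∧ ∀ x, E x a → ∃ s, E s a ∧ SuccOf E x s
def InfinityAx (E : X → X → Prop) : Prop := ∃ a, InductiveSet E a
def SetFoundationAx (E : X → X → Prop) : Prop :=
  ∀ z, (∃ x, E x z) → ∃ y, E y z ∧ ∀ x, E x y → ¬ E x z
/-- The axiom of choice: every set of pairwise disjoint nonempty sets has a transversal. -/
def ACAx (E : X → X → Prop) : Prop :=
  ∀ a, (∀ x, E x a → ∃ z, E z x) →
    (∀ x y, E x a → E y a → x ≠ y → ∀ z, E z x → ¬ E z y) →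
    ∃ c, ∀ x, E x a → ∃! z, E z c ∧ E z x

def SeparationScheme (E : X → X → Prop) (C : ∀ n, SF n → Prop) : Prop :=
  ∀ (n : ℕ) (φ : SF (n + 1)), C _ φ → ∀ (p : Fin n → X) (w : X),
    ∃ y, ∀ x, E x y ↔ (E x w ∧ φ.Eval E (Fin.snoc p x))

def CollectionScheme (E : X → X → Prop) (C : ∀ n, SF n → Prop) : Prop :=
  ∀ (n : ℕ) (φ : SF (n + 2)), C _ φ → ∀ (p : Fin n → X) (w : X),
    (∀ x, E x w → ∃ y, φ.Eval E (Fin.snoc (Fin.snoc p x) y)) →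
    ∃ c, ∀ x, E x w → ∃ y, E y c ∧ φ.Eval E (Fin.snoc (Fin.snoc p x) y)

def FoundationScheme (E : X → X → Prop) (C : ∀ n, SF n → Prop) : Prop :=
  ∀ (n : ℕ) (φ : SF (n + 1)), C _ φ → ∀ p : Fin n → X,
    (∃ x, φ.Eval E (Fin.snoc p x)) →
    ∃ y, φ.Eval E (Fin.snoc p y) ∧ ∀ x, E x y → ¬ φ.Eval E (Fin.snoc p x)

/-! ## Theories -/

def ModelMminus (E : X → X → Prop) : Prop :=
  ExtensionalityAx E ∧ EmptySetAx E ∧ PairAx E ∧ UnionAx E ∧ SetDiffAx E ∧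
    TCoAx E ∧ InfinityAx E ∧ SeparationScheme E Delta0C ∧ SetFoundationAx E

def ModelM (E : X → X → Prop) : Prop := ModelMminus E ∧ PowerAx E

def ModelKP (E : X → X → Prop) : Prop :=
  ExtensionalityAx E ∧ PairAx E ∧ UnionAx E ∧ SeparationScheme E Delta0C ∧
    CollectionScheme E Delta0C ∧ FoundationScheme E Pi1C

def ModelKPP (E : X → X → Prop) : Prop :=
  ModelM E ∧ CollectionScheme E Delta0PC ∧ FoundationScheme E Pi1PC

def ModelMOST (E : X → X → Prop) : Prop :=
  ModelM E ∧ SeparationScheme E Sigma1C ∧ ACAx E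

def ModelZF (E : X → X → Prop) : Prop :=
  ExtensionalityAx E ∧ EmptySetAx E ∧ PairAx E ∧ UnionAx E ∧ PowerAx E ∧
    InfinityAx E ∧ SeparationScheme E FullC ∧ CollectionScheme E FullC ∧
    FoundationScheme E FullC

/-! ## Internal set-theoretic machinery -/

/-- `p = {{x}, {x, y}}` (Kuratowski pair). -/
def IsPair (E : X → X → Prop) (p x y : X) : Prop :=
  ∀ z, E z p ↔ ((∀ w, E w z ↔ w = x) ∨ (∀ w, E w z ↔ (w = x ∨ w = y)))

def FunApp (E : X → X → Prop) (f x y : X) : Prop := ∃ q, E q f ∧ IsPair E q x y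

/-- `f` is a function with domain `d`. -/
def IsFuncOn (E : X → X → Prop) (f d : X) : Prop :=
  (∀ q, E q f → ∃ x y, IsPair E q x y ∧ E x d) ∧
  (∀ x y y', FunApp E f x y → FunApp E f x y' → y = y') ∧
  (∀ x, E x d → ∃ y, FunApp E f x y)

/-- `f` is an injective function from `dom` into `cod`. -/
def InjFunInto (E : X → X → Prop) (f dom cod : X) : Prop :=
  IsFuncOn E f dom ∧ (∀ x y, FunApp E f x y → E y cod) ∧
  (∀ x x' y, FunApp E f x y → FunApp E f x' y → x = x')

/-- `|t| ≤ |κ|`. -/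
def CardLe (E : X → X → Prop) (t κ : X) : Prop := ∃ f, InjFunInto E f t κ

def IsOrdinal (E : X → X → Prop) (x : X) : Prop :=
  TransSet E x ∧ ∀ y, E y x → TransSet E y

/-- An (initial ordinal =) cardinal: an ordinal that does not inject into any of
its members. -/
def IsCardinal (E : X → X → Prop) (κ : X) : Prop :=
  IsOrdinal E κ ∧ ∀ β, E β κ → ¬ CardLe E κ β

/-- `t` is the transitive closure of the set `x`. -/
def IsTCset (E : X → X → Prop) (t x : X) : Prop :=
  TransSet E t ∧ SubE E x t ∧ ∀ u, TransSet E u → SubE E x u → SubE E t u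

/-- `t` is the transitive closure of `{x}`. -/
def IsTCsingleton (E : X → X → Prop) (t x : X) : Prop :=
  TransSet E t ∧ E x t ∧ ∀ u, TransSet E u → E x u → SubE E t u

def IsOmega (E : X → X → Prop) (w : X) : Prop :=
  InductiveSet E w ∧ ∀ a, InductiveSet E a → SubE E w a

/-- `⟨X, E⟩` is `ω`-standard: its internal natural numbers are order-isomorphic
to the standard natural numbers. -/
def OmegaStandard (E : X → X → Prop) : Prop :=
  ∀ w, IsOmega E w → ∃ f : ℕ → X, (∀ n, E (f n) w) ∧ (∀ x, E x w → ∃ n, x = f n) ∧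
    ∀ m n : ℕ, (E (f m) (f n) ↔ m < n)

/-- `f` is (a function coding) the cumulative hierarchy `β ↦ V_β` for `β ∈ α`,
using `V_β = ⋃_{γ∈β} 𝒫(V_γ)`. -/
def IsRK (E : X → X → Prop) (α f : X) : Prop :=
  IsOrdinal E α ∧ IsFuncOn E f α ∧
  ∀ β vβ, E β α → FunApp E f β vβ →
    ∀ x, E x vβ ↔ ∃ γ, E γ β ∧ ∃ vγ, FunApp E f γ vγ ∧ SubE E x vγ

/-- Internal rank comparison `ρ(x) ≤ ρ(y)`: `x` belongs to every stage of the
cumulative hierarchy that `y` belongs to. -/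
def RankLe (E : X → X → Prop) (x y : X) : Prop :=
  ∀ α f β v, IsRK E α f → E β α → FunApp E f β v → E y v → E x v

/-- External `n`-th von Neumann natural number. -/
def IsVN (E : X → X → Prop) : ℕ → X → Prop
  | 0, x => ∀ z, ¬ E z x
  | (n + 1), x => ∃ y, IsVN E n y ∧ SuccOf E y x

/-- `a` is the `n`-th infinite cardinal `ℵ_n` (for external `n`, as computed in
the model): `ℵ₀ = ω`, and `ℵ_{n+1}` is the least cardinal above `ℵ_n`. -/
def IsAleph (E : X → X → Prop) : ℕ → X → Prop
  | 0, a => IsOmega E a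
  | (n + 1), a => ∃ b, IsAleph E n b ∧ IsCardinal E a ∧ E b a ∧
      ∀ c, IsCardinal E c → E b c → (c = a ∨ E a c)

/-- `a` is the cardinal `ℵ_ω` of the model: the least limit cardinal above `ω`. -/
def IsAlephOmega (E : X → X → Prop) (a : X) : Prop :=
  (IsCardinal E a ∧ (∃ w, IsOmega E w ∧ E w a) ∧
    (∀ β, E β a → ∃ μ, IsCardinal E μ ∧ E β μ ∧ E μ a)) ∧
  ∀ a', (IsCardinal E a' ∧ (∃ w, IsOmega E w ∧ E w a') ∧
    (∀ β, E β a' → ∃ μ, IsCardinal E μ ∧ E β μ ∧ E μ a')) → (a = a' ∨ E a a')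

/-! ## Internal satisfaction and the constructible hierarchy (for `V = L`) -/

/-- `c = ⟨n, a⟩` with the tag `n` an external natural (internally coded). -/
def TaggedBy (E : X → X → Prop) (c : X) (n : ℕ) (a : X) : Prop :=
  ∃ t, IsVN E n t ∧ IsPair E c t a

def CodeMem (E : X → X → Prop) (c i j : X) : Prop := ∃ p, IsPair E p i j ∧ TaggedBy E c 0 p
def CodeEq (E : X → X → Prop) (c i j : X) : Prop := ∃ p, IsPair E p i j ∧ TaggedBy E c 1 p
def CodeNot (E : X → X → Prop) (c' c : X) : Prop := TaggedBy E c' 2 c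
def CodeAnd (E : X → X → Prop) (c' c₁ c₂ : X) : Prop := ∃ p, IsPair E p c₁ c₂ ∧ TaggedBy E c' 3 p
def CodeEx (E : X → X → Prop) (c' i c : X) : Prop := ∃ p, IsPair E p i c ∧ TaggedBy E c' 4 p

/-- `d` is closed under the internal formation rules for codes of formulas with
variables indexed by elements of `w` (the internal `ω`). -/
def ClosedCode (E : X → X → Prop) (w d : X) : Prop :=
  (∀ i j c, E i w → E j w → CodeMem E c i j → E c d) ∧
  (∀ i j c, E i w → E j w → CodeEq E c i j → E c d) ∧
  (∀ c c', E c d → CodeNot E c' c → E c' d) ∧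
  (∀ c₁ c₂ c', E c₁ d → E c₂ d → CodeAnd E c' c₁ c₂ → E c' d) ∧
  (∀ i c c', E i w → E c d → CodeEx E c' i c → E c' d)

/-- `c` is an internal code of a first-order formula of the language of set theory. -/
def FormCode (E : X → X → Prop) (w c : X) : Prop := ∀ d, ClosedCode E w d → E c d

/-- An internal assignment of elements of `a` to the variables. -/
def IsAssign (E : X → X → Prop) (w a v : X) : Prop :=
  IsFuncOn E v w ∧ ∀ i y, FunApp E v i y → E y a

/-- `v' = v[i ↦ x]`. -/
def UpdateAssign (E : X → X → Prop) (w v : X) (i x v' : X) : Prop :=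
  FunApp E v' i x ∧ ∀ j, E j w → j ≠ i → ∀ y, (FunApp E v j y ↔ FunApp E v' j y)

def PairIn (E : X → X → Prop) (s c v : X) : Prop := ∃ q, E q s ∧ IsPair E q c v

/-- `s` is a (full) satisfaction class for the set structure `⟨a, E⟩`: a set of
pairs ⟨code, assignment⟩ obeying the Tarski conditions. -/
def SatSet (E : X → X → Prop) (w a s : X) : Prop :=
  (∀ q, E q s → ∃ c v, IsPair E q c v ∧ FormCode E w c ∧ IsAssign E w a v) ∧
  (∀ i j c v xi xj, E i w → E j w → CodeMem E c i j → IsAssign E w a v →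
    FunApp E v i xi → FunApp E v j xj → (PairIn E s c v ↔ E xi xj)) ∧
  (∀ i j c v xi xj, E i w → E j w → CodeEq E c i j → IsAssign E w a v →
    FunApp E v i xi → FunApp E v j xj → (PairIn E s c v ↔ xi = xj)) ∧
  (∀ c c' v, FormCode E w c → CodeNot E c' c → IsAssign E w a v →
    (PairIn E s c' v ↔ ¬ PairIn E s c v)) ∧
  (∀ c₁ c₂ c' v, FormCode E w c₁ → FormCode E w c₂ → CodeAnd E c' c₁ c₂ →
    IsAssign E w a v → (PairIn E s c' v ↔ (PairIn E s c₁ v ∧ PairIn E s c₂ v))) ∧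
  (∀ i c c' v, E i w → FormCode E w c → CodeEx E c' i c → IsAssign E w a v →
    (PairIn E s c' v ↔ ∃ x v', E x a ∧ IsAssign E w a v' ∧ UpdateAssign E w v i x v' ∧
      PairIn E s c v'))

/-- `b` is a subset of `a` definable over `⟨a, E⟩` (with parameters from `a`). -/
def DefSub (E : X → X → Prop) (w a s b : X) : Prop :=
  SubE E b a ∧ ∃ c, FormCode E w c ∧ ∃ v, IsAssign E w a v ∧ ∃ i, E i w ∧
    ∀ x, E x b ↔ (E x a ∧ ∃ v', IsAssign E w a v' ∧ UpdateAssign E w v i x v' ∧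
      PairIn E s c v')

/-- `f` codes the constructible hierarchy `β ↦ L_β` for `β ∈ α`, using
`L_β = ⋃_{γ∈β} Def(L_γ)`. -/
def IsLHier (E : X → X → Prop) (w f α : X) : Prop :=
  IsOrdinal E α ∧ IsFuncOn E f α ∧
  ∀ β vβ, E β α → FunApp E f β vβ →
    ∀ x, E x vβ ↔ ∃ γ, E γ β ∧ ∃ vγ, FunApp E f γ vγ ∧ ∃ s, SatSet E w vγ s ∧
      DefSub E w vγ s x

/-- The axiom `V = L`: every set belongs to some level of the constructible hierarchy. -/
def VeqL (E : X → X → Prop) : Prop :=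
  ∀ w, IsOmega E w → ∀ x, ∃ α f β vβ, IsLHier E w f α ∧ E β α ∧ FunApp E f β vβ ∧ E x vβ

/-! ## Extensions -/

/-- The substructure of `⟨X, E⟩` with underlying set `A`. -/
def restrict (E : X → X → Prop) (A : Set X) : A → A → Prop := fun a b => E a.1 b.1

/-- `B` is an end extension of `A` (both substructures of an ambient `⟨X, E⟩`). -/
def EndExtIn (E : X → X → Prop) (A B : Set X) : Prop :=
  A ⊆ B ∧ ∀ x y, x ∈ B → y ∈ A → E x y → x ∈ A

/-- `B` is a powerset-preserving end extension of `A` (within an ambient `⟨X, E⟩`);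
`x ⊆ y` is computed in `B`. -/
def PowExtIn (E : X → X → Prop) (A B : Set X) : Prop :=
  EndExtIn E A B ∧ ∀ x y, x ∈ B → y ∈ A → (∀ z, z ∈ B → E z x → E z y) → x ∈ A

/-- The whole structure `⟨X, E⟩` is an end extension of its substructure on `A`. -/
def EndExtSet (E : X → X → Prop) (A : Set X) : Prop :=
  ∀ x y, y ∈ A → E x y → x ∈ A

/-- `⟨X, E⟩` is a powerset-preserving end extension of its substructure on `A`. -/
def PowExtSet (E : X → X → Prop) (A : Set X) : Prop :=
  EndExtSet E A ∧ ∀ x y, y ∈ A → SubE E x y → x ∈ A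

/-- `⟨X, E⟩` is a rank extension of its substructure on `A`. -/
def RankExtSet (E : X → X → Prop) (A : Set X) : Prop :=
  PowExtSet E A ∧ ∀ x y, y ∈ A → RankLe E x y → x ∈ A

/-- The extension `⟨X, E⟩` of its substructure on `A` is proper and topless. -/
def ToplessSet (E : X → X → Prop) (A : Set X) : Prop :=
  A ≠ Set.univ ∧ ∀ c, (∀ x, E x c → x ∈ A) → c ∈ A

/-- The extension `⟨X, E⟩` of its substructure on `A` is proper and blunt (not topless). -/
def BluntSet (E : X → X → Prop) (A : Set X) : Prop :=
  A ≠ Set.univ ∧ ¬ ToplessSet E A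

/-! ## Weak dependent choice -/

/-- `δ_ω^φ(b, f, p)`: `f` is a function on `ω` with `f(0) = {b}` tracing the
`φ`-successor relation. -/
def IsWDCWitness (E : X → X → Prop) {n : ℕ} (φ : SF (n + 2)) (p : Fin n → X)
    (w b f : X) : Prop :=
  IsFuncOn E f w ∧
  (∃ z v, (∀ u, ¬ E u z) ∧ E z w ∧ FunApp E f z v ∧ ∀ t, E t v ↔ t = b) ∧
  ∀ m m' vm vm', E m w → SuccOf E m m' → E m' w → FunApp E f m vm → FunApp E f m' vm' →
    ((∀ x, E x vm → ∃ y, E y vm' ∧ φ.Eval E (Fin.snoc (Fin.snoc p x) y)) ∧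
     (∀ y, E y vm' → ∀ x, E x vm → φ.Eval E (Fin.snoc (Fin.snoc p x) y)))

/-- The scheme `Δ₀^𝒫-WDC_ω`. -/
def WDComega (E : X → X → Prop) : Prop :=
  ∀ (n : ℕ) (φ : SF (n + 2)), Delta0PC _ φ → ∀ p : Fin n → X,
    (∀ x, ∃ y, φ.Eval E (Fin.snoc (Fin.snoc p x) y)) →
    ∀ w, IsOmega E w → ∀ b, ∃ f, IsWDCWitness E φ p w b f

/-! ## Internal well-founded extensional relations (for `H_{≤κ}`) -/

def RRel (E : X → X → Prop) (R a b : X) : Prop := ∃ p, E p R ∧ IsPair E p a b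

def RelOn (E : X → X → Prop) (R k : X) : Prop :=
  ∀ p, E p R → ∃ a b, IsPair E p a b ∧ E a k ∧ E b k

/-- `BFEXT(R, k)`: `R ⊆ k × k` is extensional on `k`, has a top element, and every
nonempty subset of `k` has an `R`-minimal element. -/
def BFEXT (E : X → X → Prop) (R k : X) : Prop :=
  RelOn E R k ∧
  (∀ a b, E a k → E b k → (∀ c, E c k → (RRel E R c a ↔ RRel E R c b)) → a = b) ∧
  (∃ t, E t k ∧ ∀ b, E b k → b ≠ t → RRel E R b t) ∧
  (∀ S, SubE E S k → (∃ z, E z S) → ∃ m, E m S ∧ ∀ y, E y S → ¬ RRel E R y m)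

/-- `f` is an isomorphism of `⟨k, R⟩` with `⟨T, ∈⟩`. -/
def IsoOnto (E : X → X → Prop) (R k f T : X) : Prop :=
  IsFuncOn E f k ∧ (∀ x y, FunApp E f x y → E y T) ∧
  (∀ y, E y T → ∃ x, E x k ∧ FunApp E f x y) ∧
  (∀ x x' y, FunApp E f x y → FunApp E f x' y → x = x') ∧
  ∀ a b ya yb, E a k → E b k → FunApp E f a ya → FunApp E f b yb →
    (RRel E R a b ↔ E ya yb)

/-- The predicate `Xv = H_{≤κ} = {x : |TC(x)| ≤ κ}`. -/
def HleqPred (E : X → X → Prop) (Xv κ : X) : Prop :=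
  IsCardinal E κ ∧ ∀ x, E x Xv ↔ ∃ t, IsTCset E t x ∧ CardLe E t κ

/-- The explicit conjunction (i) ∧ (ii) ∧ (iii) asserting `Xv = H_{≤κ}`. -/
def ExplicitH (E : X → X → Prop) (Xv κ : X) : Prop :=
  IsCardinal E κ ∧
  (∀ R, BFEXT E R κ → ∃ x f T, E x Xv ∧ E f Xv ∧ E T Xv ∧ IsTCsingleton E T x ∧
    IsoOnto E R κ f T) ∧
  (∀ x, E x Xv → ∃ T f, E T Xv ∧ E f Xv ∧ IsTCsingleton E T x ∧ InjFunInto E f T κ)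

/-!
Suppose some `x` satisfies `∃ y θ(p, x, y)` but no such `x` is `∈`-minimal. Code the instances as
Kuratowski pairs `⟨x, y⟩`: every such witness pair then has a witness pair `⟨x', y'⟩` with
`x' ∈ x`, and this step relation is `Δ₀^𝒫`. Weak dependent choice started at `⟨x₀, y₀⟩` gives
`f` on `ω` whose successive values keep supplying such descending witness pairs. `Δ₀^𝒫`-separation,
which holds in `M` because `⊆`-quantifiers can be bounded by the power set of a transitive set,
collects the first components of the witness pairs in `⋃⋃⋃ f` into a set `z`. It is nonempty and
has no `∈`-minimal element, contradicting set foundation.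
-/

section Renaming

variable {E : X → X → Prop}

def liftRen {n m : ℕ} (f : Fin n → Fin m) : Fin (n + 1) → Fin (m + 1) :=
  Fin.snoc (fun k => (f k).castSucc) (Fin.last m)

def SF.rename : {n m : ℕ} → (Fin n → Fin m) → SF n → SF m
  | _, _, f, .mem i j => .mem (f i) (f j)
  | _, _, f, .eq i j => .eq (f i) (f j)
  | _, _, f, .not φ => .not (φ.rename f)
  | _, _, f, .and φ ψ => .and (φ.rename f) (ψ.rename f)
  | _, _, f, .or φ ψ => .or (φ.rename f) (ψ.rename f)
  | _, _, f, .bexMem i φ => .bexMem (f i) (φ.rename (liftRen f))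
  | _, _, f, .ballMem i φ => .ballMem (f i) (φ.rename (liftRen f))
  | _, _, f, .bexSub i φ => .bexSub (f i) (φ.rename (liftRen f))
  | _, _, f, .ballSub i φ => .ballSub (f i) (φ.rename (liftRen f))
  | _, _, f, .ex φ => .ex (φ.rename (liftRen f))
  | _, _, f, .all φ => .all (φ.rename (liftRen f))

lemma snoc_comp_liftRen {n m : ℕ} (f : Fin n → Fin m) (v : Fin m → X) (x : X) :
    (Fin.snoc v x : Fin (m + 1) → X) ∘ liftRen f = Fin.snoc (v ∘ f) x := by
  funext i
  refine Fin.lastCases ?_ (fun j => ?_) i <;> simp [liftRen]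

lemma SF.eval_rename {n m : ℕ} (φ : SF n) (f : Fin n → Fin m) (v : Fin m → X) :
    (φ.rename f).Eval E v ↔ φ.Eval E (v ∘ f) := by
  induction φ generalizing m with
  | mem | eq => rfl
  | not | and | or | bexMem | ballMem | bexSub | ballSub | ex | all =>
    simp only [SF.rename, SF.Eval, snoc_comp_liftRen, Function.comp_apply, *]

lemma SF.IsDelta0P.rename {n m : ℕ} {φ : SF n} (h : φ.IsDelta0P) (f : Fin n → Fin m) :
    (φ.rename f).IsDelta0P := by
  induction φ generalizing m with
  | mem | eq => trivial
  | not _ ih => exact ih h f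
  | bexMem _ _ ih | ballMem _ _ ih | bexSub _ _ ih | ballSub _ _ ih => exact ih h (liftRen f)
  | and _ _ ih₁ ih₂ | or _ _ ih₁ ih₂ => exact ⟨ih₁ h.1 f, ih₂ h.2 f⟩
  | ex | all => exact h.elim

end Renaming

section DeltaZeroPSeparation

variable {E : X → X → Prop}

def Supertransitive (E : X → X → Prop) (u : X) : Prop :=
  TransSet E u ∧ ∀ a, E a u → ∀ b, SubE E b a → E b u

def subsetF {m : ℕ} (i j : Fin m) : SF m := .ballMem i (.mem (Fin.last m) j.castSucc)

lemma eval_subsetF {m : ℕ} (i j : Fin m) (v : Fin m → X) :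
    (subsetF i j).Eval E v ↔ SubE E (v i) (v j) := by
  simp [subsetF, SF.Eval, SubE]

/-- Bounds every `⊆`-quantifier by a new variable `u`, placed first; the translation is
faithful when `u` is supertransitive. -/
def SF.toDelta0 : {n : ℕ} → SF n → SF (n + 1)
  | _, .mem i j => .mem i.succ j.succ
  | _, .eq i j => .eq i.succ j.succ
  | _, .not φ => .not φ.toDelta0
  | _, .and φ ψ => .and φ.toDelta0 ψ.toDelta0
  | _, .or φ ψ => .or φ.toDelta0 ψ.toDelta0
  | _, .bexMem i φ => .bexMem i.succ φ.toDelta0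
  | _, .ballMem i φ => .ballMem i.succ φ.toDelta0
  | n, .bexSub i φ => .bexMem 0 (.and (subsetF (Fin.last (n + 1)) i.succ.castSucc) φ.toDelta0)
  | n, .ballSub i φ =>
      .ballMem 0 (.or (.not (subsetF (Fin.last (n + 1)) i.succ.castSucc)) φ.toDelta0)
  | _, .ex φ => .ex φ.toDelta0
  | _, .all φ => .all φ.toDelta0

lemma SF.IsDelta0P.toDelta0 {n : ℕ} {φ : SF n} (h : φ.IsDelta0P) : φ.toDelta0.IsDelta0 := by
  induction φ with
  | mem | eq => trivial
  | not _ ih | bexMem _ _ ih | ballMem _ _ ih => exact ih h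
  | bexSub _ _ ih | ballSub _ _ ih => exact ⟨trivial, ih h⟩
  | and _ _ ih₁ ih₂ | or _ _ ih₁ ih₂ => exact ⟨ih₁ h.1, ih₂ h.2⟩
  | ex | all => exact h.elim

lemma snoc_mem_of_forall_mem {n : ℕ} {u x : X} {v : Fin n → X} (hv : ∀ i, E (v i) u)
    (hx : E x u) (i : Fin (n + 1)) : E ((Fin.snoc v x : Fin (n + 1) → X) i) u := by
  refine Fin.lastCases ?_ (fun j => ?_) i <;> simp [hx, hv]

lemma SF.eval_toDelta0 {n : ℕ} {u : X} (hu : Supertransitive E u) {φ : SF n}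
    (hφ : φ.IsDelta0P) {v : Fin n → X} (hv : ∀ i, E (v i) u) :
    φ.toDelta0.Eval E (Fin.cons u v) ↔ φ.Eval E v := by
  induction φ with
  | mem | eq => simp [SF.toDelta0, SF.Eval]
  | not _ ih => simp only [SF.toDelta0, SF.Eval, ih hφ hv]
  | and _ _ ih₁ ih₂ | or _ _ ih₁ ih₂ =>
    simp only [SF.toDelta0, SF.Eval, ih₁ hφ.1 hv, ih₂ hφ.2 hv]
  | bexMem i _ ih =>
    simp only [SF.toDelta0, SF.Eval, Fin.cons_succ, ← Fin.cons_snoc_eq_snoc_cons]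
    exact exists_congr fun x => and_congr_right fun hx =>
      ih hφ (snoc_mem_of_forall_mem hv (hu.1 _ (hv i) _ hx))
  | ballMem i _ ih =>
    simp only [SF.toDelta0, SF.Eval, Fin.cons_succ, ← Fin.cons_snoc_eq_snoc_cons]
    exact forall_congr' fun x => imp_congr_right fun hx =>
      ih hφ (snoc_mem_of_forall_mem hv (hu.1 _ (hv i) _ hx))
  | bexSub i _ ih =>
    simp only [SF.toDelta0, SF.Eval, eval_subsetF, Fin.cons_zero, Fin.snoc_last,
      Fin.snoc_castSucc, Fin.cons_succ]
    simp only [← Fin.cons_snoc_eq_snoc_cons]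
    constructor
    · rintro ⟨x, hxu, hsub, h⟩
      exact ⟨x, hsub, (ih hφ (snoc_mem_of_forall_mem hv hxu)).1 h⟩
    · rintro ⟨x, hsub, h⟩
      have hxu : E x u := hu.2 _ (hv i) _ hsub
      exact ⟨x, hxu, hsub, (ih hφ (snoc_mem_of_forall_mem hv hxu)).2 h⟩
  | ballSub i _ ih =>
    simp only [SF.toDelta0, SF.Eval, eval_subsetF, Fin.cons_zero, Fin.snoc_last,
      Fin.snoc_castSucc, Fin.cons_succ, ← imp_iff_not_or]
    simp only [← Fin.cons_snoc_eq_snoc_cons]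
    constructor
    · intro h x hsub
      have hxu : E x u := hu.2 _ (hv i) _ hsub
      exact (ih hφ (snoc_mem_of_forall_mem hv hxu)).1 (h x hxu hsub)
    · intro h x hxu hsub
      exact (ih hφ (snoc_mem_of_forall_mem hv hxu)).2 (h x hsub)
  | ex | all => exact hφ.elim

lemma exists_binUnion (hPair : PairAx E) (hUnion : UnionAx E) (a b : X) :
    ∃ c, ∀ z, E z c ↔ E z a ∨ E z b := by
  obtain ⟨d, hd⟩ := hPair a b
  obtain ⟨c, hc⟩ := hUnion d
  refine ⟨c, fun z => (hc z).trans ⟨?_, ?_⟩⟩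
  · rintro ⟨y, hy, hz⟩
    rcases (hd y).1 hy with rfl | rfl
    exacts [Or.inl hz, Or.inr hz]
  · rintro (hz | hz)
    exacts [⟨a, (hd a).2 (Or.inl rfl), hz⟩, ⟨b, (hd b).2 (Or.inr rfl), hz⟩]

lemma exists_mem_and_forall_mem (hPair : PairAx E) (hUnion : UnionAx E) {n : ℕ}
    (p : Fin n → X) (w : X) : ∃ a, E w a ∧ ∀ i, E (p i) a := by
  induction n with
  | zero =>
    obtain ⟨a, ha⟩ := hPair w w
    exact ⟨a, (ha w).2 (Or.inl rfl), fun i => i.elim0⟩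
  | succ n ih =>
    obtain ⟨a, hwa, ha⟩ := ih (fun k => p k.castSucc)
    obtain ⟨s, hs⟩ := hPair (p (Fin.last n)) (p (Fin.last n))
    obtain ⟨c, hc⟩ := exists_binUnion hPair hUnion a s
    refine ⟨c, (hc w).2 (Or.inl hwa), fun i => (hc _).2 ?_⟩
    refine Fin.lastCases ?_ (fun j => ?_) i
    exacts [Or.inr ((hs _).2 (Or.inl rfl)), Or.inl (ha j)]

/-- The power set of a transitive set is supertransitive. -/
lemma exists_supertransitive_mem (hTCo : TCoAx E) (hPow : PowerAx E) (a : X) :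
    ∃ u, Supertransitive E u ∧ E a u := by
  obtain ⟨t, htrans, hat⟩ := hTCo a
  obtain ⟨u, hu⟩ := hPow t
  refine ⟨u, ⟨fun y hy z hz => (hu z).2 (htrans z ((hu y).1 hy z hz)), fun y hy z hz =>
    (hu z).2 fun x hx => (hu y).1 hy x (hz x hx)⟩, (hu a).2 hat⟩

theorem separationScheme_delta0P (hPair : PairAx E) (hUnion : UnionAx E) (hTCo : TCoAx E)
    (hPow : PowerAx E) (hSep : SeparationScheme E Delta0C) : SeparationScheme E Delta0PC := by
  intro n φ hφ p w
  obtain ⟨a, hwa, hpa⟩ := exists_mem_and_forall_mem hPair hUnion p w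
  obtain ⟨u, hu, hau⟩ := exists_supertransitive_mem hTCo hPow a
  obtain ⟨y, hy⟩ := hSep (n + 1) φ.toDelta0 hφ.toDelta0 (Fin.cons u p) w
  refine ⟨y, fun x => (hy x).trans (and_congr_right fun hxw => ?_)⟩
  rw [← Fin.cons_snoc_eq_snoc_cons]
  exact SF.eval_toDelta0 hu hφ (snoc_mem_of_forall_mem (fun i => hu.1 _ hau _ (hpa i))
    (hu.1 _ (hu.1 _ hau _ hwa) _ hxw))

end DeltaZeroPSeparation

section Naturals

variable {E : X → X → Prop}

def ZeroOrSucc (E : X → X → Prop) (y : X) : Prop := (∀ z, ¬ E z y) ∨ ∃ z, SuccOf E z y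

def IsNat (E : X → X → Prop) (x : X) : Prop :=
  TransSet E x ∧ ZeroOrSucc E x ∧ ∀ y, E y x → ZeroOrSucc E y

def transF {m : ℕ} (i : Fin m) : SF m :=
  .ballMem i (.ballMem (Fin.last m) (.mem (Fin.last (m + 1)) i.castSucc.castSucc))

def succOfF {m : ℕ} (iz iy : Fin m) : SF m :=
  .and (.mem iz iy) (.and (subsetF iz iy)
    (.ballMem iy (.or (.mem (Fin.last m) iz.castSucc) (.eq (Fin.last m) iz.castSucc))))

def zeroOrSuccF {m : ℕ} (i : Fin m) : SF m :=
  .or (.ballMem i (.not (.eq (Fin.last m) (Fin.last m))))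
    (.bexMem i (succOfF (Fin.last m) i.castSucc))

def isNatF : SF 1 :=
  .and (transF 0) (.and (zeroOrSuccF 0) (.ballMem 0 (zeroOrSuccF (Fin.last 1))))

lemma eval_transF {m : ℕ} (i : Fin m) (v : Fin m → X) :
    (transF i).Eval E v ↔ TransSet E (v i) := by
  simp [transF, SF.Eval, TransSet]

lemma eval_succOfF {m : ℕ} (iz iy : Fin m) (v : Fin m → X) :
    (succOfF iz iy).Eval E v ↔ SuccOf E (v iz) (v iy) := by
  simp only [succOfF, SF.Eval, eval_subsetF, Fin.snoc_last, Fin.snoc_castSucc, SuccOf, SubE]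
  constructor
  · rintro ⟨hzy, hsub, hy⟩ t
    exact ⟨hy t, fun ht => ht.elim (hsub t) (· ▸ hzy)⟩
  · intro h
    exact ⟨(h _).2 (Or.inr rfl), fun t ht => (h t).2 (Or.inl ht), fun t => (h t).1⟩

lemma eval_zeroOrSuccF {m : ℕ} (i : Fin m) (v : Fin m → X) :
    (zeroOrSuccF i).Eval E v ↔ ZeroOrSucc E (v i) := by
  simp only [zeroOrSuccF, SF.Eval, eval_succOfF, Fin.snoc_last, Fin.snoc_castSucc, ZeroOrSucc,
    not_true_eq_false, imp_false]
  exact or_congr Iff.rfl ⟨fun ⟨z, _, hz⟩ => ⟨z, hz⟩, fun ⟨z, hz⟩ => ⟨z, (hz z).2 (Or.inr rfl), hz⟩⟩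

lemma eval_isNatF (v : Fin 1 → X) : isNatF.Eval E v ↔ IsNat E (v 0) := by
  simp only [isNatF, SF.Eval, eval_transF, eval_zeroOrSuccF, Fin.snoc_last, IsNat]

lemma isDelta0_isNatF : isNatF.IsDelta0 := by
  simp [isNatF, transF, zeroOrSuccF, succOfF, subsetF, SF.IsDelta0]

lemma isNat_of_forall_not_mem {x : X} (hx : ∀ z, ¬ E z x) : IsNat E x :=
  ⟨fun y hy => absurd hy (hx y), Or.inl hx, fun y hy => absurd hy (hx y)⟩

lemma IsNat.succOf {x s : X} (hx : IsNat E x) (hs : SuccOf E x s) : IsNat E s := by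
  obtain ⟨htrans, hzs, hmem⟩ := hx
  refine ⟨fun y hy z hz => ?_, Or.inr ⟨x, hs⟩, fun y hy => ?_⟩
  · rcases (hs y).1 hy with hyx | rfl
    exacts [(hs z).2 (Or.inl (htrans y hyx z hz)), (hs z).2 (Or.inl hz)]
  · rcases (hs y).1 hy with hyx | rfl
    exacts [hmem y hyx, hzs]

/-- Apply set foundation to `(x ∪ {x}) \ b`: its minimal element is `0` or a successor of an
element of `b`, so it lies in `b` after all. -/
lemma IsNat.mem_of_inductiveSet (hExt : ExtensionalityAx E) (hPair : PairAx E)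
    (hUnion : UnionAx E) (hDiff : SetDiffAx E) (hFound : SetFoundationAx E) {x b : X}
    (hx : IsNat E x) (hb : InductiveSet E b) : E x b := by
  by_contra hxb
  obtain ⟨s, hs⟩ : ∃ s, SuccOf E x s := by
    obtain ⟨sx, hsx⟩ := hPair x x
    obtain ⟨s, hs⟩ := exists_binUnion hPair hUnion x sx
    exact ⟨s, fun z => (hs z).trans (or_congr_right ((hsx z).trans or_self_iff))⟩
  obtain ⟨d, hd⟩ := hDiff s b
  obtain ⟨y, hyd, hmin⟩ := hFound d ⟨x, (hd x).2 ⟨(hs x).2 (Or.inr rfl), hxb⟩⟩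
  obtain ⟨hys, hyb⟩ := (hd y).1 hyd
  have hy : ZeroOrSucc E y := by
    rcases (hs y).1 hys with hyx | rfl
    exacts [hx.2.2 y hyx, hx.2.1]
  rcases hy with hempty | ⟨z, hzy⟩
  · obtain ⟨e, heb, he⟩ := hb.1
    exact hyb (hExt y e (fun t => iff_of_false (hempty t) (he t)) ▸ heb)
  · have hzs : E z s := by
      rcases (hs y).1 hys with hyx | rfl
      exacts [(hs z).2 (Or.inl (hx.1 y hyx z ((hzy z).2 (Or.inr rfl)))),
        (hs z).2 (Or.inl ((hzy z).2 (Or.inr rfl)))]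
    have hzb : E z b := by
      by_contra hzb
      exact hmin z ((hzy z).2 (Or.inr rfl)) ((hd z).2 ⟨hzs, hzb⟩)
    obtain ⟨s', hs'b, hs'⟩ := hb.2 z hzb
    exact hyb (hExt y s' (fun t => (hzy t).trans (hs' t).symm) ▸ hs'b)

/-- `ω` is carved out of any inductive set by the `Δ₀` formula `isNatF`. -/
lemma ModelMminus.exists_isOmega (hM : ModelMminus E) :
    ∃ w, IsOmega E w ∧ ∀ m, E m w → IsNat E m := by
  obtain ⟨hExt, -, hPair, hUnion, hDiff, -, ⟨a, ha⟩, hSep, hFound⟩ := hM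
  obtain ⟨w, hw⟩ := hSep 0 isNatF isDelta0_isNatF Fin.elim0 a
  simp only [eval_isNatF] at hw
  have hwNat : ∀ m, E m w → IsNat E m := fun m hm => ((hw m).1 hm).2
  obtain ⟨e, hea, he⟩ := ha.1
  refine ⟨w, ⟨⟨⟨e, (hw e).2 ⟨hea, isNat_of_forall_not_mem he⟩, he⟩, fun x hx => ?_⟩,
    fun b hb x hx => (hwNat x hx).mem_of_inductiveSet hExt hPair hUnion hDiff hFound hb⟩, hwNat⟩
  obtain ⟨s, hsa, hs⟩ := ha.2 x ((hw x).1 hx).1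
  exact ⟨s, (hw s).2 ⟨hsa, (hwNat x hx).succOf hs⟩, hs⟩

end Naturals

section KuratowskiPairs

variable {E : X → X → Prop}

def IsSingletonOf (E : X → X → Prop) (z x : X) : Prop := E x z ∧ ∀ t, E t z → t = x

def IsDoubletonOf (E : X → X → Prop) (z x y : X) : Prop :=
  E x z ∧ E y z ∧ ∀ t, E t z → t = x ∨ t = y

/-- `P = ⟨x, y⟩`, stated without appeal to extensionality (unlike `IsPair`) so that it is `Δ₀`. -/
def IsKPair (E : X → X → Prop) (P x y : X) : Prop :=
  (∀ z, E z P → IsSingletonOf E z x ∨ IsDoubletonOf E z x y) ∧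
    (∃ z, E z P ∧ IsSingletonOf E z x) ∧ ∃ z, E z P ∧ IsDoubletonOf E z x y

lemma IsKPair.fst_eq {P x y x' y' : X} (h : IsKPair E P x y) (h' : IsKPair E P x' y') :
    x' = x := by
  obtain ⟨z, hzP, hz⟩ := h.2.1
  rcases h'.1 z hzP with hz' | hz' <;> exact hz.2 x' hz'.1

lemma IsKPair.fst_mem_of_mem {P x y z : X} (h : IsKPair E P x y) (hz : E z P) : E x z := by
  rcases h.1 z hz with hz | hz
  exacts [hz.1, hz.1]

lemma PairAx.exists_isKPair (hPair : PairAx E) (x y : X) : ∃ P, IsKPair E P x y := by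
  obtain ⟨s, hs⟩ := hPair x x
  obtain ⟨d, hd⟩ := hPair x y
  obtain ⟨P, hP⟩ := hPair s d
  have hsP : IsSingletonOf E s x := ⟨(hs x).2 (Or.inl rfl), fun t ht => ((hs t).1 ht).elim id id⟩
  have hdP : IsDoubletonOf E d x y :=
    ⟨(hd x).2 (Or.inl rfl), (hd y).2 (Or.inr rfl), fun t => (hd t).1⟩
  refine ⟨P, fun z hz => ?_, ⟨s, (hP s).2 (Or.inl rfl), hsP⟩, ⟨d, (hP d).2 (Or.inr rfl), hdP⟩⟩
  rcases (hP z).1 hz with rfl | rfl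
  exacts [Or.inl hsP, Or.inr hdP]

lemma SetFoundationAx.not_mem_self (hFound : SetFoundationAx E) (hPair : PairAx E) (x : X) :
    ¬ E x x := by
  intro hxx
  obtain ⟨s, hs⟩ := hPair x x
  obtain ⟨y, hy, hmin⟩ := hFound s ⟨x, (hs x).2 (Or.inl rfl)⟩
  obtain rfl : y = x := ((hs y).1 hy).elim id id
  exact hmin y hxx hy

/-- A nonempty `P = z ∪ {z}` with `P = ⟨x, y⟩` would give `x ∈ z ⊆ P`, hence `x ∈ x`. -/
lemma IsNat.not_isKPair_of_mem (hFound : SetFoundationAx E) (hPair : PairAx E) {m P x y : X}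
    (hm : IsNat E m) (hPm : E P m) (hP : IsKPair E P x y) : False := by
  obtain ⟨s, hsP, -⟩ := hP.2.1
  rcases hm.2.2 P hPm with hempty | ⟨z, hz⟩
  · exact hempty s hsP
  · have hxP : E x P := (hz x).2 (Or.inl (hP.fst_mem_of_mem ((hz z).2 (Or.inr rfl))))
    exact hFound.not_mem_self hPair x (hP.fst_mem_of_mem hxP)

lemma IsPair.exists_mem_snd_mem (hPair : PairAx E) {q a b : X} (hq : IsPair E q a b) :
    ∃ c, E c q ∧ E b c := by
  obtain ⟨c, hc⟩ := hPair a b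
  exact ⟨c, (hq c).2 (Or.inr hc), (hc b).2 (Or.inr rfl)⟩

def singletonF {m : ℕ} (iz ix : Fin m) : SF m :=
  .and (.mem ix iz) (.ballMem iz (.eq (Fin.last m) ix.castSucc))

def doubletonF {m : ℕ} (iz ix iy : Fin m) : SF m :=
  .and (.mem ix iz) (.and (.mem iy iz)
    (.ballMem iz (.or (.eq (Fin.last m) ix.castSucc) (.eq (Fin.last m) iy.castSucc))))

def kPairF {m : ℕ} (iP ix iy : Fin m) : SF m :=
  .and (.ballMem iP (.or (singletonF (Fin.last m) ix.castSucc)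
      (doubletonF (Fin.last m) ix.castSucc iy.castSucc)))
    (.and (.bexMem iP (singletonF (Fin.last m) ix.castSucc))
      (.bexMem iP (doubletonF (Fin.last m) ix.castSucc iy.castSucc)))

/-- `∃ x y, P = ⟨x, y⟩ ∧ body(x, y)`, with the components found inside the members of `P`. -/
def exKPairF {m : ℕ} (iP : Fin m) (body : SF (m + 2)) : SF m :=
  .bexMem iP <| .bexMem (Fin.last m) <| .bexMem iP.castSucc.castSucc <|
    .bexMem (Fin.last (m + 2)) <|
      .and (kPairF iP.castSucc.castSucc.castSucc.castSucc
          ((Fin.last (m + 1)).castSucc.castSucc) (Fin.last (m + 3)))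
        (body.rename (Fin.snoc (Fin.snoc (fun k => k.castSucc.castSucc.castSucc.castSucc)
          ((Fin.last (m + 1)).castSucc.castSucc)) (Fin.last (m + 3))))

lemma eval_kPairF {m : ℕ} (iP ix iy : Fin m) (v : Fin m → X) :
    (kPairF iP ix iy).Eval E v ↔ IsKPair E (v iP) (v ix) (v iy) := by
  simp [kPairF, singletonF, doubletonF, SF.Eval, IsKPair, IsSingletonOf, IsDoubletonOf]

lemma eval_exKPairF {m : ℕ} (iP : Fin m) (body : SF (m + 2)) (v : Fin m → X) :
    (exKPairF iP body).Eval E v ↔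
      ∃ x y, IsKPair E (v iP) x y ∧ body.Eval E (Fin.snoc (Fin.snoc v x) y) := by
  simp only [exKPairF, SF.Eval, eval_kPairF, SF.eval_rename, Fin.comp_snoc]
  simp only [Function.comp_def, Fin.snoc_castSucc, Fin.snoc_last]
  constructor
  · rintro ⟨-, -, x, -, -, -, y, -, h⟩
    exact ⟨x, y, h⟩
  · rintro ⟨x, y, hP, h⟩
    obtain ⟨s, hsP, hs⟩ := hP.2.1
    obtain ⟨d, hdP, hd⟩ := hP.2.2
    exact ⟨s, hsP, x, hs.1, d, hdP, y, hd.2.1, hP, h⟩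

lemma isDelta0P_exKPairF {m : ℕ} (iP : Fin m) {body : SF (m + 2)} (h : body.IsDelta0P) :
    (exKPairF iP body).IsDelta0P :=
  ⟨by simp [kPairF, singletonF, doubletonF, SF.IsDelta0P], h.rename _⟩

end KuratowskiPairs

section Descent

variable {E : X → X → Prop} {n : ℕ}

def IsWitnessPair (E : X → X → Prop) (θ : SF (n + 2)) (p : Fin n → X) (P x : X) : Prop :=
  ∃ y, IsKPair E P x y ∧ θ.Eval E (Fin.snoc (Fin.snoc p x) y)

variable (θ : SF (n + 2))

def goodPairF : SF (n + 2) :=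
  exKPairF (Fin.last n).castSucc
    (θ.rename (Fin.snoc (Fin.snoc (fun k => k.castSucc.castSucc.castSucc.castSucc)
      (Fin.last (n + 2)).castSucc) (Fin.last (n + 3))))

def descPairF : SF (n + 2) :=
  exKPairF (Fin.last n).castSucc <| exKPairF (Fin.last (n + 1)).castSucc.castSucc <|
    .and (.mem (Fin.last (n + 4)).castSucc (Fin.last (n + 2)).castSucc.castSucc.castSucc)
      (θ.rename (Fin.snoc (Fin.snoc
        (fun k => k.castSucc.castSucc.castSucc.castSucc.castSucc.castSucc)
        (Fin.last (n + 4)).castSucc) (Fin.last (n + 5))))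

/-- The `Δ₀^𝒫` relation fed to `WDC_ω`: if `P` is a witness pair for `x`, then `Q` is a witness
pair for some `x' ∈ x`. -/
def stepF : SF (n + 2) := .or (.not (goodPairF θ)) (descPairF θ)

def goodFstF : SF (n + 2) :=
  .bexMem (Fin.last n).castSucc <| exKPairF (Fin.last (n + 2)) <|
    .and (.eq (Fin.last (n + 3)).castSucc (Fin.last (n + 1)).castSucc.castSucc.castSucc)
      (θ.rename (Fin.snoc (Fin.snoc (fun k => k.castSucc.castSucc.castSucc.castSucc.castSucc)
        (Fin.last (n + 3)).castSucc) (Fin.last (n + 4))))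

variable {θ}

lemma isDelta0P_stepF (hθ : θ.IsDelta0P) : (stepF θ).IsDelta0P :=
  ⟨isDelta0P_exKPairF _ (hθ.rename _),
    isDelta0P_exKPairF _ (isDelta0P_exKPairF _ ⟨trivial, hθ.rename _⟩)⟩

lemma isDelta0P_goodFstF (hθ : θ.IsDelta0P) : (goodFstF θ).IsDelta0P :=
  isDelta0P_exKPairF _ ⟨trivial, hθ.rename _⟩

variable (θ)

lemma eval_goodPairF (p : Fin n → X) (P Q : X) :
    (goodPairF θ).Eval E (Fin.snoc (Fin.snoc p P) Q) ↔ ∃ x, IsWitnessPair E θ p P x := by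
  simp only [goodPairF, eval_exKPairF, SF.eval_rename, Fin.comp_snoc]
  simp only [Function.comp_def, Fin.snoc_castSucc, Fin.snoc_last, IsWitnessPair]

lemma eval_descPairF (p : Fin n → X) (P Q : X) :
    (descPairF θ).Eval E (Fin.snoc (Fin.snoc p P) Q) ↔
      ∃ x y, IsKPair E P x y ∧ ∃ x', E x' x ∧ IsWitnessPair E θ p Q x' := by
  simp only [descPairF, eval_exKPairF, SF.Eval, SF.eval_rename, Fin.comp_snoc]
  simp only [Function.comp_def, Fin.snoc_castSucc, Fin.snoc_last, IsWitnessPair]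
  exact exists₂_congr fun x y => and_congr_right fun _ =>
    ⟨fun ⟨x', y', hQ, hx', h⟩ => ⟨x', hx', y', hQ, h⟩,
      fun ⟨x', hx', y', hQ, h⟩ => ⟨x', y', hQ, hx', h⟩⟩

lemma eval_goodFstF (p : Fin n → X) (U x : X) :
    (goodFstF θ).Eval E (Fin.snoc (Fin.snoc p U) x) ↔ ∃ P, E P U ∧ IsWitnessPair E θ p P x := by
  simp only [goodFstF, SF.Eval, eval_exKPairF, SF.eval_rename, Fin.comp_snoc]
  simp only [Function.comp_def, Fin.snoc_castSucc, Fin.snoc_last, IsWitnessPair]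
  exact exists_congr fun P => and_congr_right fun _ =>
    ⟨fun ⟨_, y, hP, rfl, h⟩ => ⟨y, hP, h⟩, fun ⟨y, hP, h⟩ => ⟨x, y, hP, rfl, h⟩⟩

variable {θ}

lemma forall_exists_stepF (hPair : PairAx E) {p : Fin n → X}
    (hnomin : ∀ x, (SF.ex θ).Eval E (Fin.snoc p x) →
      ∃ x', E x' x ∧ (SF.ex θ).Eval E (Fin.snoc p x')) (P : X) :
    ∃ Q, (stepF θ).Eval E (Fin.snoc (Fin.snoc p P) Q) := by
  by_cases hP : ∃ x, IsWitnessPair E θ p P x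
  · obtain ⟨x, y, hPxy, hxy⟩ := hP
    obtain ⟨x', hx'x, y', hx'y'⟩ := hnomin x ⟨y, hxy⟩
    obtain ⟨Q, hQ⟩ := hPair.exists_isKPair x' y'
    exact ⟨Q, Or.inr ((eval_descPairF θ p P Q).2 ⟨x, y, hPxy, x', hx'x, y', hQ, hx'y'⟩)⟩
  · exact ⟨P, Or.inl fun h => hP ((eval_goodPairF θ p P P).1 h)⟩

lemma exists_set_of_isWitnessPair (hSepP : SeparationScheme E Delta0PC) (hTCo : TCoAx E)
    (hθ : θ.IsDelta0P) (p : Fin n → X) (U : X) :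
    ∃ z, ∀ x, E x z ↔ ∃ P, E P U ∧ IsWitnessPair E θ p P x := by
  obtain ⟨t, htrans, hUt⟩ := hTCo U
  obtain ⟨z, hz⟩ := hSepP (n + 1) (goodFstF θ) (isDelta0P_goodFstF hθ) (Fin.snoc p U) t
  refine ⟨z, fun x => (hz x).trans ?_⟩
  rw [eval_goodFstF]
  refine and_iff_right_of_imp ?_
  rintro ⟨P, hPU, y, hPxy, -⟩
  obtain ⟨s, hsP, hs⟩ := hPxy.2.1
  exact htrans s (htrans P (hUt P hPU) s hsP) x hs.1

end Descent

section WDCChain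

variable {E : X → X → Prop}

def IsUnion3 (E : X → X → Prop) (U f : X) : Prop :=
  ∀ P, E P U ↔ ∃ q, E q f ∧ ∃ c, E c q ∧ ∃ a, E a c ∧ E P a

lemma UnionAx.exists_isUnion3 (hUnion : UnionAx E) (f : X) : ∃ U, IsUnion3 E U f := by
  obtain ⟨u₁, hu₁⟩ := hUnion f
  obtain ⟨u₂, hu₂⟩ := hUnion u₁
  obtain ⟨U, hU⟩ := hUnion u₂
  refine ⟨U, fun P => ⟨fun hP => ?_, fun ⟨q, hq, c, hc, a, ha, hPa⟩ =>
    (hU P).2 ⟨a, (hu₂ a).2 ⟨c, (hu₁ c).2 ⟨q, hq, hc⟩, ha⟩, hPa⟩⟩⟩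
  obtain ⟨a, ha, hPa⟩ := (hU P).1 hP
  obtain ⟨c, hc, hac⟩ := (hu₂ a).1 ha
  obtain ⟨q, hq, hcq⟩ := (hu₁ c).1 hc
  exact ⟨q, hq, c, hcq, a, hac, hPa⟩

lemma FunApp.mem_of_mem (hPair : PairAx E) {U f m a P : X} (hU : IsUnion3 E U f)
    (hma : FunApp E f m a) (hPa : E P a) : E P U := by
  obtain ⟨q, hq, hqma⟩ := hma
  obtain ⟨c, hc, hac⟩ := hqma.exists_mem_snd_mem hPair
  exact (hU P).2 ⟨q, hq, c, hc, a, hac, hPa⟩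

/-- A pair lying in `⋃⋃⋃ f` lies in a value of `f`: the other candidates are elements of
natural numbers in the domain, which are never pairs. -/
lemma IsFuncOn.exists_funApp_of_isKPair (hFound : SetFoundationAx E) (hPair : PairAx E)
    {f w U P x y : X} (hf : IsFuncOn E f w) (hwNat : ∀ m, E m w → IsNat E m)
    (hU : IsUnion3 E U f) (hPU : E P U) (hP : IsKPair E P x y) :
    ∃ m a, E m w ∧ FunApp E f m a ∧ E P a := by
  obtain ⟨q, hq, c, hc, a, ha, hPa⟩ := (hU P).1 hPU
  obtain ⟨m, v, hqmv, hmw⟩ := hf.1 q hq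
  have hamv : a = m ∨ a = v := by
    rcases (hqmv c).1 hc with hcm | hcmv
    exacts [Or.inl ((hcm a).1 ha), (hcmv a).1 ha]
  rcases hamv with rfl | rfl
  · exact ((hwNat a hmw).not_isKPair_of_mem hFound hPair hPa hP).elim
  · exact ⟨m, a, hmw, ⟨q, hq, hqmv⟩, hPa⟩

lemma IsWDCWitness.exists_isWitnessPair_mem (hFound : SetFoundationAx E) (hPair : PairAx E)
    {n : ℕ} {θ : SF (n + 2)} {p : Fin n → X} {w b f U P x : X} (hw : IsOmega E w)
    (hwNat : ∀ m, E m w → IsNat E m) (hf : IsWDCWitness E (stepF θ) p w b f)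
    (hU : IsUnion3 E U f) (hPU : E P U) (hP : IsWitnessPair E θ p P x) :
    ∃ Q, E Q U ∧ ∃ x', E x' x ∧ IsWitnessPair E θ p Q x' := by
  obtain ⟨y, hPxy, hxy⟩ := hP
  obtain ⟨m, a, hmw, hma, hPa⟩ := hf.1.exists_funApp_of_isKPair hFound hPair hwNat hU hPU hPxy
  obtain ⟨m', hm'w, hmm'⟩ := hw.1.2 m hmw
  obtain ⟨a', hm'a'⟩ := hf.1.2.2 m' hm'w
  obtain ⟨Q, hQa', hPQ⟩ := (hf.2.2 m m' a a' hmw hmm' hm'w hma hm'a').1 P hPa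
  have hgood : (goodPairF θ).Eval E (Fin.snoc (Fin.snoc p P) Q) :=
    (eval_goodPairF θ p P Q).2 ⟨x, y, hPxy, hxy⟩
  obtain ⟨x₂, y₂, hPxy₂, x', hx'x₂, hQ⟩ :=
    (eval_descPairF θ p P Q).1 (hPQ.resolve_left (not_not.2 hgood))
  obtain rfl := hPxy.fst_eq hPxy₂
  exact ⟨Q, hm'a'.mem_of_mem hPair hU hQa', x', hx'x₂, hQ⟩

end WDCChain

/-- `M + Δ₀^𝒫-WDC_ω` proves `Σ₁^𝒫`-Foundation. -/
theorem sigma1P_foundation_of_WDC (X : Type u) (E : X → X → Prop)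
    (hM : ModelM E) (hW : WDComega E) : FoundationScheme E Sigma1PC := by
  rintro n _ ⟨θ, hθ, rfl⟩ p ⟨x₀, y₀, h₀⟩
  by_contra! hnomin
  obtain ⟨w, hw, hwNat⟩ := hM.1.exists_isOmega
  obtain ⟨⟨-, -, hPair, hUnion, -, hTCo, -, hSep, hFound⟩, hPow⟩ := hM
  obtain ⟨b, hb⟩ := hPair.exists_isKPair x₀ y₀
  obtain ⟨f, hf⟩ :=
    hW n (stepF θ) (isDelta0P_stepF hθ) p (forall_exists_stepF hPair hnomin) w hw b
  obtain ⟨U, hU⟩ := hUnion.exists_isUnion3 f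
  obtain ⟨z, hz⟩ := exists_set_of_isWitnessPair
    (separationScheme_delta0P hPair hUnion hTCo hPow hSep) hTCo hθ p U
  have hbU : E b U := by
    obtain ⟨_, v, -, -, hv, hbv⟩ := hf.2.1
    exact hv.mem_of_mem hPair hU ((hbv b).2 rfl)
  obtain ⟨x, hxz, hmin⟩ := hFound z ⟨x₀, (hz x₀).2 ⟨b, hbU, y₀, hb, h₀⟩⟩
  obtain ⟨P, hPU, hP⟩ := (hz x).1 hxz
  obtain ⟨Q, hQU, x', hx'x, hQ⟩ :=
    hf.exists_isWitnessPair_mem hFound hPair hw hwNat hU hPU hP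
  exact hmin x' hx'x ((hz x').2 ⟨Q, hQU, hQ⟩)
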